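/- Let (X,Y) have standard normal margins and positively dependent copula C. Fix α ∈ (0,1) and suppose -log[1 - C_{V|U}^{-1}(α|u)] ~ k_α [-log(1-u)]^η as u → 1^- for constants k_α > 0, η ∈ (0,1]. Then F_{Y|X}^{-1}(α|x) ~ (2^{1-η} k_α)^{1/2} x^η as x → +∞. -/

import Mathlib

open Real Set Filter Topology

/-- The standard normal CDF `Φ`. -/
noncomputable def stdNormalCDF (x : ℝ) : ℝ :=
  (∫ t in Set.Iic x, Real.exp (-t ^ 2 / 2)) / Real.sqrt (2 * Real.pi)

/-!
Write `L x = -log (1 - Φ x)`. The Gaussian tail bounds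
`exp (-(x + 1) ^ 2 / 2) ≤ ∫ t in Ioi x, exp (-t ^ 2 / 2) ≤ exp (-x ^ 2 / 2) / x` give
`L x = x ^ 2 / 2 + O(x)`, so `L x ~ x ^ 2 / 2`. Evaluating the hypothesis on `q` at `u = Φ x`
and using `Φ (Qy x) = q (Φ x)` yields `L (Qy x) ~ k (L x) ^ η ~ k (x ^ 2 / 2) ^ η → ∞`. As `L`
is monotone, `Qy x → ∞`, hence also `L (Qy x) ~ Qy x ^ 2 / 2`, so
`Qy x ^ 2 ~ 2 ^ (1 - η) k x ^ (2 η)`, and taking square roots gives the claim.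
-/

open MeasureTheory Asymptotics

lemma exp_neg_sq_div_two_eq : (fun t : ℝ => exp (-t ^ 2 / 2)) = fun t => exp (-2⁻¹ * t ^ 2) := by
  ext t
  ring_nf

lemma integrable_exp_neg_sq_div_two : Integrable fun t : ℝ => exp (-t ^ 2 / 2) := by
  rw [exp_neg_sq_div_two_eq]
  exact integrable_exp_neg_mul_sq (by norm_num)

lemma integral_exp_neg_sq_div_two : ∫ t : ℝ, exp (-t ^ 2 / 2) = √(2 * π) := by
  rw [exp_neg_sq_div_two_eq, integral_gaussian, div_inv_eq_mul, mul_comm]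

lemma one_sub_stdNormalCDF (x : ℝ) :
    1 - stdNormalCDF x = (∫ t in Ioi x, exp (-t ^ 2 / 2)) / √(2 * π) := by
  have hsum := intervalIntegral.integral_Iic_add_Ioi (b := x)
    integrable_exp_neg_sq_div_two.integrableOn integrable_exp_neg_sq_div_two.integrableOn
  rw [integral_exp_neg_sq_div_two] at hsum
  have : 0 < √(2 * π) := by positivity
  rw [stdNormalCDF, eq_div_iff this.ne', sub_mul, div_mul_cancel₀ _ this.ne', one_mul]
  linarith

lemma monotone_stdNormalCDF : Monotone stdNormalCDF := fun a b hab => by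
  unfold stdNormalCDF
  gcongr
  · exact ae_of_all _ fun t => (exp_pos _).le
  · exact integrable_exp_neg_sq_div_two.integrableOn

lemma exp_neg_sq_div_two_le_integral_Ioi (x : ℝ) :
    exp (-(|x| + 1) ^ 2 / 2) ≤ ∫ t in Ioi x, exp (-t ^ 2 / 2) := by
  have hmin : ∀ t ∈ Ioc x (x + 1), exp (-(|x| + 1) ^ 2 / 2) ≤ exp (-t ^ 2 / 2) := by
    intro t ⟨hxt, htx⟩
    have : t ^ 2 ≤ (|x| + 1) ^ 2 :=
      sq_le_sq' (by linarith [neg_abs_le x]) (by linarith [le_abs_self x])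
    gcongr
  calc exp (-(|x| + 1) ^ 2 / 2) = ∫ _ in Ioc x (x + 1), exp (-(|x| + 1) ^ 2 / 2) := by
        simp
    _ ≤ ∫ t in Ioc x (x + 1), exp (-t ^ 2 / 2) :=
        setIntegral_mono_on (integrableOn_const (by simp [Real.volume_Ioc]))
          integrable_exp_neg_sq_div_two.integrableOn measurableSet_Ioc hmin
    _ ≤ ∫ t in Ioi x, exp (-t ^ 2 / 2) :=
        setIntegral_mono_set integrable_exp_neg_sq_div_two.integrableOn
          (ae_of_all _ fun t => (exp_pos _).le) Ioc_subset_Ioi_self.eventuallyLE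

lemma integral_Ioi_exp_neg_sq_div_two_pos (x : ℝ) : 0 < ∫ t in Ioi x, exp (-t ^ 2 / 2) :=
  (exp_pos _).trans_le (exp_neg_sq_div_two_le_integral_Ioi x)

lemma stdNormalCDF_lt_one (x : ℝ) : stdNormalCDF x < 1 := by
  have := div_pos (integral_Ioi_exp_neg_sq_div_two_pos x) (by positivity : 0 < √(2 * π))
  linarith [one_sub_stdNormalCDF x]

lemma hasDerivAt_neg_exp_neg_sq_div_two (t : ℝ) :
    HasDerivAt (fun s => -exp (-s ^ 2 / 2)) (t * exp (-t ^ 2 / 2)) t := by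
  have hsq : HasDerivAt (fun s : ℝ => -s ^ 2 / 2) (-t) t :=
    ((hasDerivAt_pow 2 t).neg.div_const 2).congr_deriv (by push_cast; ring)
  exact hsq.exp.neg.congr_deriv (by ring)

lemma tendsto_neg_exp_neg_sq_div_two_atTop :
    Tendsto (fun s : ℝ => -exp (-s ^ 2 / 2)) atTop (𝓝 0) := by
  have : Tendsto (fun s : ℝ => -s ^ 2 / 2) atTop atBot :=
    (tendsto_neg_atBot_iff.2 (tendsto_pow_atTop two_ne_zero)).atBot_div_const two_pos
  simpa using (tendsto_exp_atBot.comp this).neg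

lemma integrableOn_Ioi_mul_exp_neg_sq_div_two {x : ℝ} (hx : 0 ≤ x) :
    IntegrableOn (fun t => t * exp (-t ^ 2 / 2)) (Ioi x) :=
  integrableOn_Ioi_deriv_of_nonneg' (fun t _ => hasDerivAt_neg_exp_neg_sq_div_two t)
    (fun _ ht => mul_nonneg (hx.trans ht.le) (exp_pos _).le) tendsto_neg_exp_neg_sq_div_two_atTop

lemma integral_Ioi_mul_exp_neg_sq_div_two {x : ℝ} (hx : 0 ≤ x) :
    ∫ t in Ioi x, t * exp (-t ^ 2 / 2) = exp (-x ^ 2 / 2) := by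
  rw [integral_Ioi_of_hasDerivAt_of_nonneg' (fun t _ => hasDerivAt_neg_exp_neg_sq_div_two t)
    (fun _ ht => mul_nonneg (hx.trans ht.le) (exp_pos _).le) tendsto_neg_exp_neg_sq_div_two_atTop]
  ring

lemma integral_Ioi_exp_neg_sq_div_two_le {x : ℝ} (hx : 0 < x) :
    ∫ t in Ioi x, exp (-t ^ 2 / 2) ≤ exp (-x ^ 2 / 2) / x := by
  rw [← integral_Ioi_mul_exp_neg_sq_div_two hx.le, ← integral_div]
  refine setIntegral_mono_on integrable_exp_neg_sq_div_two.integrableOn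
    ((integrableOn_Ioi_mul_exp_neg_sq_div_two hx.le).div_const x) measurableSet_Ioi
    fun t ht => ?_
  rw [le_div_iff₀ hx]
  exact mul_le_mul_of_nonneg_right (le_of_lt ht) (exp_pos _).le |>.trans_eq' (mul_comm _ _)

lemma abs_neg_log_one_sub_stdNormalCDF_sub_le {x : ℝ} (hx : 1 ≤ x) :
    |-log (1 - stdNormalCDF x) - x ^ 2 / 2| ≤ |log √(2 * π)| + x + 1 := by
  have hT := integral_Ioi_exp_neg_sq_div_two_pos x
  have hlog : -log (1 - stdNormalCDF x) =
      log √(2 * π) - log (∫ t in Ioi x, exp (-t ^ 2 / 2)) := by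
    rw [one_sub_stdNormalCDF, log_div hT.ne' (by positivity)]
    ring
  have hlower : -(x + 1) ^ 2 / 2 ≤ log (∫ t in Ioi x, exp (-t ^ 2 / 2)) := by
    simpa [abs_of_nonneg (zero_le_one.trans hx)] using
      log_le_log (exp_pos _) (exp_neg_sq_div_two_le_integral_Ioi x)
  have hupper : log (∫ t in Ioi x, exp (-t ^ 2 / 2)) ≤ -x ^ 2 / 2 - log x := by
    simpa [log_div (exp_pos _).ne' (by linarith : x ≠ 0)] using
      log_le_log hT (integral_Ioi_exp_neg_sq_div_two_le (by linarith))
  have := log_nonneg hx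
  have : (x + 1) ^ 2 = x ^ 2 + 2 * x + 1 := by ring
  rw [abs_le]
  constructor <;> linarith [neg_abs_le (log √(2 * π)), le_abs_self (log √(2 * π))]

lemma neg_log_one_sub_stdNormalCDF_isEquivalent :
    (fun x => -log (1 - stdNormalCDF x)) ~[atTop] fun x => x ^ 2 / 2 := by
  have hO : (fun x => -log (1 - stdNormalCDF x) - x ^ 2 / 2) =O[atTop] fun x => x ^ 1 := by
    refine IsBigO.of_bound (|log √(2 * π)| + 2) ?_
    filter_upwards [eventually_ge_atTop 1] with x hx
    rw [Real.norm_eq_abs, Real.norm_eq_abs, pow_one, abs_of_nonneg (show 0 ≤ x by linarith)]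
    nlinarith [abs_neg_log_one_sub_stdNormalCDF_sub_le hx, abs_nonneg (log √(2 * π))]
  refine hO.trans_isLittleO ?_
  simpa only [div_eq_inv_mul] using
    (isLittleO_pow_pow_atTop_of_lt (𝕜 := ℝ) one_lt_two).const_mul_right' (c := (2 : ℝ)⁻¹)
      (by norm_num)

lemma tendsto_neg_log_one_sub_stdNormalCDF_atTop :
    Tendsto (fun x => -log (1 - stdNormalCDF x)) atTop atTop :=
  neg_log_one_sub_stdNormalCDF_isEquivalent.symm.tendsto_atTop
    ((tendsto_pow_atTop two_ne_zero).atTop_div_const two_pos)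

lemma tendsto_stdNormalCDF_atTop : Tendsto stdNormalCDF atTop (𝓝[<] 1) := by
  refine tendsto_nhdsWithin_of_tendsto_nhds_of_eventually_within _ ?_
    (Eventually.of_forall stdNormalCDF_lt_one)
  have h := (tendsto_exp_atBot.comp
    (tendsto_neg_atBot_iff.2 tendsto_neg_log_one_sub_stdNormalCDF_atTop)).const_sub 1
  refine (sub_zero (1 : ℝ) ▸ h).congr fun x => ?_
  simp [exp_log (sub_pos.2 (stdNormalCDF_lt_one x))]

lemma monotone_neg_log_one_sub_stdNormalCDF :
    Monotone fun x => -log (1 - stdNormalCDF x) := fun _ b hab =>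
  neg_le_neg <| log_le_log (sub_pos.2 (stdNormalCDF_lt_one b))
    (sub_le_sub_left (monotone_stdNormalCDF hab) 1)

lemma tendsto_atTop_of_tendsto_neg_log_one_sub_stdNormalCDF {α : Type*} {l : Filter α}
    {f : α → ℝ} (h : Tendsto (fun a => -log (1 - stdNormalCDF (f a))) l atTop) :
    Tendsto f l atTop :=
  tendsto_atTop.2 fun _ => (h.eventually_gt_atTop _).mono fun _ hM =>
    (monotone_neg_log_one_sub_stdNormalCDF.reflect_lt hM).le

lemma tendsto_div_of_sq_isEquivalent {α : Type*} {l : Filter α} {f g : α → ℝ}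
    (hf : ∀ᶠ a in l, 0 ≤ f a) (hg : ∀ᶠ a in l, 0 < g a)
    (h : (fun a => f a ^ 2) ~[l] fun a => g a ^ 2) :
    Tendsto (fun a => f a / g a) l (𝓝 1) := by
  have hsqrt := h.rpow (r := 1 / 2) (fun a => sq_nonneg (g a))
  have hfg : f ~[l] g := by
    refine (hsqrt.congr_left ?_).congr_right ?_
    · filter_upwards [hf] with a ha
      rw [Pi.pow_apply, ← sqrt_eq_rpow, sqrt_sq ha]
    · filter_upwards [hg] with a ha
      rw [Pi.pow_apply, ← sqrt_eq_rpow, sqrt_sq ha.le]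
  exact (isEquivalent_iff_tendsto_one (hg.mono fun _ ha => ha.ne')).1 hfg

lemma sq_rpow_half_mul_rpow {k η x : ℝ} (hk : 0 ≤ k) (hx : 0 ≤ x) :
    ((2 ^ (1 - η) * k) ^ ((1 : ℝ) / 2) * x ^ η) ^ 2 = 2 * (k * (x ^ 2 / 2) ^ η) := by
  rw [mul_pow, ← rpow_natCast, ← rpow_mul (by positivity), ← rpow_natCast (x ^ η),
    ← rpow_mul hx, div_rpow (by positivity) zero_le_two, rpow_sub two_pos, rpow_one,
    ← rpow_natCast x, ← rpow_mul hx]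
  norm_num
  field_simp

theorem cond_quantile_upper_tail_shape_general (k η : ℝ)
    (hk : 0 < k) (hη : η ∈ Ioc (0:ℝ) 1)
    (q : ℝ → ℝ)
    (hq : Tendsto (fun u : ℝ => (-Real.log (1 - q u)) / (k * (-Real.log (1 - u)) ^ η))
      (𝓝[<] (1:ℝ)) (𝓝 1))
    (Qy : ℝ → ℝ) (hQy : ∀ x : ℝ, stdNormalCDF (Qy x) = q (stdNormalCDF x)) :
    Tendsto (fun x : ℝ => Qy x / ((2 ^ (1 - η) * k) ^ ((1:ℝ)/2) * x ^ η))
      atTop (𝓝 1) := by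
  set L : ℝ → ℝ := fun y => -log (1 - stdNormalCDF y)
  have hL : L ~[atTop] fun x => x ^ 2 / 2 := neg_log_one_sub_stdNormalCDF_isEquivalent
  have hLQ : (fun x => L (Qy x)) ~[atTop] fun x => k * (x ^ 2 / 2) ^ η := by
    have h := (isEquivalent_of_tendsto_one hq).comp_tendsto tendsto_stdNormalCDF_atTop
    simp only [Function.comp_def, ← hQy] at h
    exact h.trans (IsEquivalent.refl.mul (hL.rpow fun x => by positivity))
  have hQ : Tendsto Qy atTop atTop :=
    tendsto_atTop_of_tendsto_neg_log_one_sub_stdNormalCDF <| hLQ.symm.tendsto_atTop <|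
      ((tendsto_rpow_atTop hη.1).comp
        ((tendsto_pow_atTop two_ne_zero).atTop_div_const two_pos)).const_mul_atTop hk
  refine tendsto_div_of_sq_isEquivalent (hQ.eventually_ge_atTop 0) ?_ ?_
  · filter_upwards [eventually_gt_atTop 0] with x hx
    positivity
  · have h := (IsEquivalent.refl (u := fun _ : ℝ => (2 : ℝ))).mul
      ((hL.comp_tendsto hQ).symm.trans hLQ)
    refine (h.congr_left (.of_forall fun x => ?_)).congr_right ?_
    · simp only [Pi.mul_apply, Function.comp_apply]
      ring
    · filter_upwards [eventually_ge_atTop 0] with x hx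
      exact (sq_rpow_half_mul_rpow hk.le hx).symm

/-- Let `(X,Y)` have standard normal margins and copula `C` with conditional quantile
function `q u = C_{V|U}^{-1}(α|u)`.  Fix `α ∈ (0,1)` and suppose
`-log[1 - q(u)] ~ k_α [-log(1-u)]^η` as `u → 1⁻` with `k_α > 0`, `η ∈ (0,1]`.  Then the
conditional quantile `Qy x = F_{Y|X}^{-1}(α|x)` (characterized by `Φ(Qy x) = q(Φ x)`)
satisfies `Qy x ~ (2^{1-η} k_α)^{1/2} x^η` as `x → +∞`. -/
theorem cond_quantile_upper_tail_shape (α k η : ℝ) (hα : α ∈ Ioo (0:ℝ) 1)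
    (hk : 0 < k) (hη : η ∈ Ioc (0:ℝ) 1)
    (q : ℝ → ℝ) (hq_mem : ∀ u ∈ Ioo (0:ℝ) 1, q u ∈ Ioo (0:ℝ) 1)
    (hq : Tendsto (fun u : ℝ => (-Real.log (1 - q u)) / (k * (-Real.log (1 - u)) ^ η))
      (𝓝[<] (1:ℝ)) (𝓝 1))
    (Qy : ℝ → ℝ) (hQy : ∀ x : ℝ, stdNormalCDF (Qy x) = q (stdNormalCDF x)) :
    Tendsto (fun x : ℝ => Qy x / ((2 ^ (1 - η) * k) ^ ((1:ℝ)/2) * x ^ η))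
      atTop (𝓝 1) :=
  cond_quantile_upper_tail_shape_general k η hk hη q hq Qy hQy
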